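/- A finite set S of labelled sequents is saturated if and only if S is semi-saturated and S is in normal form with respect to the rewrite relation ⇝◇. -/

import Mathlib

/-- Formulas of intuitionistic modal logic, built from atomic propositions
`a ∈ ℕ` by `A ::= ⊥ | a | (A∧A) | (A∨A) | (A⊃A) | □A | ◇A`. -/
inductive Formula : Type
  | bot  : Formula
  | atom : ℕ → Formula
  | and  : Formula → Formula → Formula
  | or   : Formula → Formula → Formula
  | imp  : Formula → Formula → Formula
  | box  : Formula → Formula
  | dia  : Formula → Formula
  deriving DecidableEq
/-- A labelled sequent `G = (R, Γ ⟹ Δ)`: relational atoms `x ≤ y` (`le`) and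
`x R y` (`rel`) over labels (natural numbers) together with the labelled formulas
occurring on the left (`Γ`) and on the right (`Δ`) of the sequent arrow. -/
structure LSeq : Type where
  le : Set (ℕ × ℕ)
  rel : Set (ℕ × ℕ)
  left : Set (ℕ × Formula)
  right : Set (ℕ × Formula)
namespace LSeq

/-- `x ≤_G y`. -/
def Le (G : LSeq) (x y : ℕ) : Prop := (x, y) ∈ G.le
/-- `x R_G y`. -/
def Rel (G : LSeq) (x y : ℕ) : Prop := (x, y) ∈ G.rel
/-- `x:A•`, i.e. `x:A` occurs on the left of `G`. -/
def Black (G : LSeq) (x : ℕ) (A : Formula) : Prop := (x, A) ∈ G.left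
/-- `x:A∘`, i.e. `x:A` occurs on the right of `G`. -/
def White (G : LSeq) (x : ℕ) (A : Formula) : Prop := (x, A) ∈ G.right

/-- The set of labels occurring in `G`. -/
def labels (G : LSeq) : Set ℕ :=
  {x | (∃ y, G.Le x y ∨ G.Le y x ∨ G.Rel x y ∨ G.Rel y x) ∨ ∃ A, G.Black x A ∨ G.White x A}

/-- `G` is a finite labelled sequent. -/
def FiniteSeq (G : LSeq) : Prop :=
  G.le.Finite ∧ G.rel.Finite ∧ G.left.Finite ∧ G.right.Finite

/-- Add labelled formulas to the left of a sequent. -/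
def addLeft (G : LSeq) (s : Set (ℕ × Formula)) : LSeq := { G with left := G.left ∪ s }
/-- Add labelled formulas to the right of a sequent. -/
def addRight (G : LSeq) (s : Set (ℕ × Formula)) : LSeq := { G with right := G.right ∪ s }

/-- Happiness for a left (`•`) occurrence of a formula at label `x` in `G` (Def. 5.3). -/
def BlackHappy (G : LSeq) (x : ℕ) : Formula → Prop
  | Formula.bot => False
  | Formula.atom _ => True
  | Formula.and A B => G.Black x A ∧ G.Black x B
  | Formula.or A B => G.Black x A ∨ G.Black x B
  | Formula.imp A B => G.White x A ∨ G.Black x B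
  | Formula.box A => ∀ z, G.Rel x z → G.Black z A ∧ G.Black z (Formula.box A)
  | Formula.dia A => ∃ y, G.Rel x y ∧ G.Black y A

/-- Happiness for a right (`∘`) occurrence of a formula at label `x` in `G` (Def. 5.3). -/
def WhiteHappy (G : LSeq) (x : ℕ) : Formula → Prop
  | Formula.bot => True
  | Formula.atom a => ¬ G.Black x (Formula.atom a)
  | Formula.and A B => G.White x A ∨ G.White x B
  | Formula.or A B => G.White x A ∧ G.White x B
  | Formula.imp A B => ∃ y, G.Le x y ∧ G.Black y A ∧ G.White y B
  | Formula.box A => ∃ y z, G.Le x y ∧ G.Rel y z ∧ G.White z A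
  | Formula.dia A => ∀ y, G.Rel x y → G.White y A ∧ G.White y (Formula.dia A)

/-- A label is happy iff all formulas occurring at it are happy. -/
def HappyLabel (G : LSeq) (x : ℕ) : Prop :=
  (∀ A, G.Black x A → G.BlackHappy x A) ∧ (∀ A, G.White x A → G.WhiteHappy x A)

/-- The left exceptions for almost happy labels: formulas of the shape `⊥•`. -/
def AlmostExceptB : Formula → Prop
  | Formula.bot => True
  | _ => False

/-- The left exceptions for naively happy labels: shapes `⊥•` and `(◇A)•`. -/
def NaiveExceptB : Formula → Prop
  | Formula.bot => True
  | Formula.dia _ => True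
  | _ => False

/-- The right exceptions for almost/naively happy labels:
shapes `a∘`, `(A⊃B)∘` and `(□A)∘`. -/
def ExceptW : Formula → Prop
  | Formula.atom _ => True
  | Formula.imp _ _ => True
  | Formula.box _ => True
  | _ => False

/-- A label is almost happy iff all formulas occurring at it are happy,
except possibly those of the shapes `⊥•`, `a∘`, `(A⊃B)∘`, `(□A)∘`. -/
def AlmostHappyLabel (G : LSeq) (x : ℕ) : Prop :=
  (∀ A, G.Black x A → ¬ AlmostExceptB A → G.BlackHappy x A) ∧
  (∀ A, G.White x A → ¬ ExceptW A → G.WhiteHappy x A)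

/-- A label is naively happy iff all formulas occurring at it are happy,
except possibly those of the shapes `⊥•`, `(◇A)•`, `a∘`, `(A⊃B)∘`, `(□A)∘`. -/
def NaivelyHappyLabel (G : LSeq) (x : ℕ) : Prop :=
  (∀ A, G.Black x A → ¬ NaiveExceptB A → G.BlackHappy x A) ∧
  (∀ A, G.White x A → ¬ ExceptW A → G.WhiteHappy x A)

/-- `G` is structurally saturated (Def. 5.5): closure under monotonicity (monL),
the frame conditions (F1) and (F2), and transitivity and reflexivity (on the
labels of `G`) of both `≤_G` and `R_G`. -/
def StructSat (G : LSeq) : Prop :=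
  (∀ x y A, G.Le x y → G.Black x A → G.Black y A) ∧
  (∀ x y z, G.Rel x y → G.Le y z → ∃ u, G.Le x u ∧ G.Rel u z) ∧
  (∀ x y z, G.Rel x y → G.Le x z → ∃ u, G.Le y u ∧ G.Rel z u) ∧
  (∀ x y z, G.Le x y → G.Le y z → G.Le x z) ∧
  (∀ x ∈ G.labels, G.Le x x) ∧
  (∀ x y z, G.Rel x y → G.Rel y z → G.Rel x z) ∧
  (∀ x ∈ G.labels, G.Rel x x)

/-- `G` is happy iff it is structurally saturated and all its labels are happy. -/
def Happy (G : LSeq) : Prop := G.StructSat ∧ ∀ x ∈ G.labels, G.HappyLabel x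

/-- `G` is axiomatic iff some label carries `x:a•` and `x:a∘`, or carries `x:⊥•`. -/
def Axiomatic (G : LSeq) : Prop :=
  ∃ x, (∃ a, G.Black x (Formula.atom a) ∧ G.White x (Formula.atom a)) ∨
       G.Black x Formula.bot

/-- The reflexive-transitive closure of `R_G ∪ R_G⁻¹`:
its equivalence classes are the layers of `G`. -/
def LayerRel (G : LSeq) : ℕ → ℕ → Prop :=
  Relation.ReflTransGen (fun x y => G.Rel x y ∨ G.Rel y x)

/-- The layer of a label. -/
def layerOf (G : LSeq) (x : ℕ) : Set ℕ := {y | G.LayerRel x y}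

/-- `L` is a layer of `G`: an equivalence class of `LayerRel`. -/
def IsLayer (G : LSeq) (L : Set ℕ) : Prop := ∃ x ∈ G.labels, L = G.layerOf x

/-- `G` is layered (Def. 6.2). -/
def Layered (G : LSeq) : Prop :=
  (∀ x y, G.Rel x y → x ≠ y → ¬ G.Le x y ∧ ¬ G.Le y x) ∧
  (∀ x x' y y', G.Rel x y → G.Rel x' y' → G.Le x x' → x ≠ x' → ¬ G.Le y' y)

/-- The order on layers: `L1 ≤ L2` iff `x ≤_G y` for some `x ∈ L1`, `y ∈ L2`. -/
def LayerLE (G : LSeq) (L1 L2 : Set ℕ) : Prop := ∃ x ∈ L1, ∃ y ∈ L2, G.Le x y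

/-- Strict order on layers. -/
def LayerLT (G : LSeq) (L1 L2 : Set ℕ) : Prop := G.LayerLE L1 L2 ∧ L1 ≠ L2

/-- `G` is tree-layered: it is layered, there is a ≤-least layer, and any two
layers below a common layer are ≤-comparable. -/
def TreeLayered (G : LSeq) : Prop :=
  G.Layered ∧
  (∃ L0, G.IsLayer L0 ∧ ∀ L, G.IsLayer L → G.LayerLE L0 L) ∧
  (∀ L L' L'', G.IsLayer L → G.IsLayer L' → G.IsLayer L'' →
    G.LayerLE L' L → G.LayerLE L'' L → G.LayerLE L' L'' ∨ G.LayerLE L'' L')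

/-- `L` is a topmost (≤-maximal) layer of `G`. -/
def Topmost (G : LSeq) (L : Set ℕ) : Prop :=
  G.IsLayer L ∧ ∀ L', G.IsLayer L' → G.LayerLE L L' → L' = L

/-- The cluster of a label: its equivalence class under `R_G ∩ R_G⁻¹`. -/
def clusterOf (G : LSeq) (x : ℕ) : Set ℕ := {y | G.Rel x y ∧ G.Rel y x}

/-- `C` is a cluster of `G`. -/
def IsCluster (G : LSeq) (C : Set ℕ) : Prop := ∃ x ∈ G.labels, C = G.clusterOf x

/-- The relation `R_G` on clusters: `C1 R_G C2` iff `x R_G y`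
for some `x ∈ C1`, `y ∈ C2`. -/
def ClRel (G : LSeq) (C1 C2 : Set ℕ) : Prop := ∃ x ∈ C1, ∃ y ∈ C2, G.Rel x y

/-- The relation `≤_G` on clusters: `C1 ≤_G C2` iff every `y ∈ C2` has some
`x ∈ C1` with `x ≤_G y`. -/
def ClLe (G : LSeq) (C1 C2 : Set ℕ) : Prop := ∀ y ∈ C2, ∃ x ∈ C1, G.Le x y

/-- `G` is tree-clustered: it is structurally saturated, some cluster is
`R_G`-below every cluster, and any two clusters below a common cluster are
`R_G`-comparable. -/
def TreeClustered (G : LSeq) : Prop :=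
  G.StructSat ∧
  (∀ C' C'', G.IsCluster C' → G.IsCluster C'' →
    ∃ C, G.IsCluster C ∧ G.ClRel C C' ∧ G.ClRel C C'') ∧
  (∀ C C' C'', G.IsCluster C → G.IsCluster C' → G.IsCluster C'' →
    G.ClRel C' C → G.ClRel C'' C → G.ClRel C' C'' ∨ G.ClRel C'' C')

/-- `G` is stable: tree-layered, tree-clustered, and all inner (non-topmost)
layers are happy. -/
def Stable (G : LSeq) : Prop :=
  G.TreeLayered ∧ G.TreeClustered ∧
  ∀ L, G.IsLayer L → ¬ G.Topmost L → ∀ x ∈ L, G.HappyLabel x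

/-- `G` is semi-saturated: stable with all topmost layers naively happy. -/
def SemiSaturated (G : LSeq) : Prop :=
  G.Stable ∧ ∀ L, G.Topmost L → ∀ x ∈ L, G.NaivelyHappyLabel x

/-- `G` is saturated: stable with all topmost layers almost happy. -/
def Saturated (G : LSeq) : Prop :=
  G.Stable ∧ ∀ L, G.Topmost L → ∀ x ∈ L, G.AlmostHappyLabel x

/-- Labels `x` (in `G`) and `y` (in `H`) are equivalent (`x ∼ y`) iff they carry
exactly the same left formulas and the same right formulas. -/
def LabEquiv (G : LSeq) (x : ℕ) (H : LSeq) (y : ℕ) : Prop :=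
  (∀ A, G.Black x A ↔ H.Black y A) ∧ (∀ A, G.White x A ↔ H.White y A)

/-- A label has no past iff `y ≤_G x` implies `y = x`. -/
def NoPast (G : LSeq) (x : ℕ) : Prop := ∀ y, G.Le y x → y = x

end LSeq

/-- A stable set of sequents: finite with all elements stable. -/
def StableSet (S : Set LSeq) : Prop := S.Finite ∧ ∀ G ∈ S, G.Stable
/-- A semi-saturated set of sequents: finite with all elements semi-saturated. -/
def SemiSaturatedSet (S : Set LSeq) : Prop := S.Finite ∧ ∀ G ∈ S, G.SemiSaturated
/-- A saturated set of sequents: finite with all elements saturated. -/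
def SaturatedSet (S : Set LSeq) : Prop := S.Finite ∧ ∀ G ∈ S, G.Saturated
/-- One semi-saturation step on a single sequent (Def. 7.1): `SStepG G T` holds
iff `G` contains an unhappy formula of one of the seven listed shapes and `T` is
the set of sequents (one or two) replacing `G`. -/
inductive SStepG : LSeq → Set LSeq → Prop
  | andL {G : LSeq} {x : ℕ} {A B : Formula} :
      G.Black x (Formula.and A B) → ¬ G.BlackHappy x (Formula.and A B) →
      SStepG G {G.addLeft {(x, A), (x, B)}}
  | orR {G : LSeq} {x : ℕ} {A B : Formula} :
      G.White x (Formula.or A B) → ¬ G.WhiteHappy x (Formula.or A B) →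
      SStepG G {G.addRight {(x, A), (x, B)}}
  | boxL {G : LSeq} {x : ℕ} {A : Formula} :
      G.Black x (Formula.box A) → ¬ G.BlackHappy x (Formula.box A) →
      SStepG G {G.addLeft {q | G.Rel x q.1 ∧ (q.2 = A ∨ q.2 = Formula.box A)}}
  | diaR {G : LSeq} {x : ℕ} {A : Formula} :
      G.White x (Formula.dia A) → ¬ G.WhiteHappy x (Formula.dia A) →
      SStepG G {G.addRight {q | G.Rel x q.1 ∧ (q.2 = A ∨ q.2 = Formula.dia A)}}
  | orL {G : LSeq} {x : ℕ} {A B : Formula} :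
      G.Black x (Formula.or A B) → ¬ G.BlackHappy x (Formula.or A B) →
      SStepG G {G.addLeft {(x, A)}, G.addLeft {(x, B)}}
  | andR {G : LSeq} {x : ℕ} {A B : Formula} :
      G.White x (Formula.and A B) → ¬ G.WhiteHappy x (Formula.and A B) →
      SStepG G {G.addRight {(x, A)}, G.addRight {(x, B)}}
  | impL {G : LSeq} {x : ℕ} {A B : Formula} :
      G.Black x (Formula.imp A B) → ¬ G.BlackHappy x (Formula.imp A B) →
      SStepG G {G.addRight {(x, A)}, G.addLeft {(x, B)}}

/-- The semi-saturation rewrite relation `⇝s` on sets of sequents (Def. 7.1). -/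
def SStep (S S' : Set LSeq) : Prop :=
  ∃ G ∈ S, ∃ T, SStepG G T ∧ S' = (S \ {G}) ∪ T

/-- `S'` is a semi-saturation of `T`: reachable from `T` by `⇝s` steps and
in normal form w.r.t. `⇝s`. -/
def SemiSaturationOf (T S' : Set LSeq) : Prop :=
  Relation.ReflTransGen SStep T S' ∧ ∀ S'', ¬ SStep S' S''
/-- The relation on `ℕ` determined by a set of pairs. -/
def relOf (s : Set (ℕ × ℕ)) : ℕ → ℕ → Prop := fun a b => (a, b) ∈ s

/-- Transitive closure of a set of relational atoms. -/
def transClose (s : Set (ℕ × ℕ)) : Set (ℕ × ℕ) :=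
  {p | Relation.TransGen (relOf s) p.1 p.2}

/-- The substitution replacing label `y` by label `x`. -/
def substLabel (x y : ℕ) : ℕ → ℕ := fun w => if w = y then x else w

/-- Apply a label substitution to a sequent. -/
def mapSeq (σ : ℕ → ℕ) (G : LSeq) : LSeq :=
  { G with
    le := (Prod.map σ σ) '' G.le,
    rel := (Prod.map σ σ) '' G.rel,
    left := (fun q => (σ q.1, q.2)) '' G.left,
    right := (fun q => (σ q.1, q.2)) '' G.right }
namespace LSeq

/-- The witness condition of Option 1 of the ◇-saturation step (Def. 7.6):
`x ≠ y` is an equivalent `R`-predecessor of `y` at which `(◇A)•` is happy and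
all of whose `R`-successors have no past. -/
def Opt1Witness (G : LSeq) (y : ℕ) (A : Formula) (x : ℕ) : Prop :=
  x ≠ y ∧ G.Rel x y ∧ LabEquiv G x G y ∧ G.BlackHappy x (Formula.dia A) ∧
  ∀ u, G.Rel x u → G.NoPast u

/-- Option 1 of the ◇-saturation step: substitute `x` for every occurrence of `y`
and close `R` under transitivity. -/
def opt1 (G : LSeq) (y x : ℕ) : LSeq :=
  { mapSeq (substLabel x y) G with rel := transClose (mapSeq (substLabel x y) G).rel }

/-- Option 2 of the ◇-saturation step: add `z ≤ z`, `y R z`, `z:A•` for a fresh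
label `z` and close `R` under transitivity and reflexivity. -/
def opt2 (G : LSeq) (y : ℕ) (A : Formula) (z : ℕ) : LSeq :=
  { G with
    le := G.le ∪ {(z, z)},
    rel := transClose (G.rel ∪ {(y, z)}) ∪ {p | p.1 = p.2 ∧ (p.1 ∈ G.labels ∨ p.1 = z)},
    left := G.left ∪ {(z, A)} }

/-- One ◇-saturation step on a single sequent (Def. 7.6). -/
def DStepG (G G' : LSeq) : Prop :=
  ∃ y A, G.Black y (Formula.dia A) ∧ ¬ G.BlackHappy y (Formula.dia A) ∧
    (∀ u, u ≠ y → G.Rel u y → ¬ G.Rel y u → G.AlmostHappyLabel u) ∧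
    ((∃ x, G.Opt1Witness y A x ∧ G' = G.opt1 y x) ∨
     ((¬ ∃ x, G.Opt1Witness y A x) ∧ ∃ z, z ∉ G.labels ∧ G' = G.opt2 y A z))

end LSeq

/-- The ◇-saturation rewrite relation `⇝◇` on sets of sequents (Def. 7.6). -/
def DStep (S S' : Set LSeq) : Prop :=
  SemiSaturatedSet S ∧ ∃ G ∈ S, ∃ G'', G.DStepG G'' ∧
    SemiSaturationOf ((S \ {G}) ∪ {G''}) S'

/-! ### Auxiliary development -/

section SatAux

open LSeq

noncomputable local instance : DecidableEq LSeq := Classical.decEq _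

/-- The subformulas of a formula (including itself). -/
def Formula.subf : Formula → Finset Formula
  | Formula.bot => {Formula.bot}
  | Formula.atom a => {Formula.atom a}
  | Formula.and A B => insert (Formula.and A B) (A.subf ∪ B.subf)
  | Formula.or A B => insert (Formula.or A B) (A.subf ∪ B.subf)
  | Formula.imp A B => insert (Formula.imp A B) (A.subf ∪ B.subf)
  | Formula.box A => insert (Formula.box A) A.subf
  | Formula.dia A => insert (Formula.dia A) A.subf

lemma Formula.self_mem_subf (A : Formula) : A ∈ A.subf := by
  cases A <;> simp [Formula.subf]

lemma Formula.subf_trans : ∀ (C B : Formula), B ∈ C.subf → B.subf ⊆ C.subf := by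
  intro C
  induction C with
  | bot => intro B hB; simp [Formula.subf] at hB; subst hB; exact subset_rfl
  | atom a => intro B hB; simp [Formula.subf] at hB; subst hB; exact subset_rfl
  | and C1 C2 ih1 ih2 =>
      intro B hB
      simp [Formula.subf] at hB
      rcases hB with rfl | h | h
      · exact subset_rfl
      · exact (ih1 B h).trans (by intro x hx; simp [Formula.subf]; tauto)
      · exact (ih2 B h).trans (by intro x hx; simp [Formula.subf]; tauto)
  | or C1 C2 ih1 ih2 =>
      intro B hB
      simp [Formula.subf] at hB
      rcases hB with rfl | h | h
      · exact subset_rfl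
      · exact (ih1 B h).trans (by intro x hx; simp [Formula.subf]; tauto)
      · exact (ih2 B h).trans (by intro x hx; simp [Formula.subf]; tauto)
  | imp C1 C2 ih1 ih2 =>
      intro B hB
      simp [Formula.subf] at hB
      rcases hB with rfl | h | h
      · exact subset_rfl
      · exact (ih1 B h).trans (by intro x hx; simp [Formula.subf]; tauto)
      · exact (ih2 B h).trans (by intro x hx; simp [Formula.subf]; tauto)
  | box C ih =>
      intro B hB
      simp [Formula.subf] at hB
      rcases hB with rfl | h
      · exact subset_rfl
      · exact (ih B h).trans (by intro x hx; simp [Formula.subf]; tauto)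
  | dia C ih =>
      intro B hB
      simp [Formula.subf] at hB
      rcases hB with rfl | h
      · exact subset_rfl
      · exact (ih B h).trans (by intro x hx; simp [Formula.subf]; tauto)

/-- A finset of formulas closed under subformulas. -/
def SfClosed (F : Finset Formula) : Prop := ∀ B ∈ F, B.subf ⊆ F

lemma sfClosed_biUnion (F₀ : Finset Formula) : SfClosed (F₀.biUnion Formula.subf) := by
  intro B hB
  simp only [Finset.mem_biUnion] at hB
  obtain ⟨C, hC, hBC⟩ := hB
  intro x hx
  exact Finset.mem_biUnion.2 ⟨C, hC, Formula.subf_trans C B hBC hx⟩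

lemma sfClosed_union {F1 F2 : Finset Formula} (h1 : SfClosed F1) (h2 : SfClosed F2) :
    SfClosed (F1 ∪ F2) := by
  intro B hB
  rcases Finset.mem_union.1 hB with h | h
  · exact (h1 B h).trans Finset.subset_union_left
  · exact (h2 B h).trans Finset.subset_union_right

lemma SfClosed.and_l {F A B} (hF : SfClosed F) (h : Formula.and A B ∈ F) : A ∈ F :=
  hF _ h (by simp [Formula.subf, Formula.self_mem_subf])
lemma SfClosed.and_r {F A B} (hF : SfClosed F) (h : Formula.and A B ∈ F) : B ∈ F :=
  hF _ h (by simp [Formula.subf, Formula.self_mem_subf])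
lemma SfClosed.or_l {F A B} (hF : SfClosed F) (h : Formula.or A B ∈ F) : A ∈ F :=
  hF _ h (by simp [Formula.subf, Formula.self_mem_subf])
lemma SfClosed.or_r {F A B} (hF : SfClosed F) (h : Formula.or A B ∈ F) : B ∈ F :=
  hF _ h (by simp [Formula.subf, Formula.self_mem_subf])
lemma SfClosed.imp_l {F A B} (hF : SfClosed F) (h : Formula.imp A B ∈ F) : A ∈ F :=
  hF _ h (by simp [Formula.subf, Formula.self_mem_subf])
lemma SfClosed.imp_r {F A B} (hF : SfClosed F) (h : Formula.imp A B ∈ F) : B ∈ F :=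
  hF _ h (by simp [Formula.subf, Formula.self_mem_subf])
lemma SfClosed.box' {F A} (hF : SfClosed F) (h : Formula.box A ∈ F) : A ∈ F :=
  hF _ h (by simp [Formula.subf, Formula.self_mem_subf])
lemma SfClosed.dia' {F A} (hF : SfClosed F) (h : Formula.dia A ∈ F) : A ∈ F :=
  hF _ h (by simp [Formula.subf, Formula.self_mem_subf])

@[simp] lemma LSeq.addLeft_left (G : LSeq) (s) : (G.addLeft s).left = G.left ∪ s := rfl
@[simp] lemma LSeq.addLeft_right (G : LSeq) (s) : (G.addLeft s).right = G.right := rfl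
@[simp] lemma LSeq.addLeft_rel (G : LSeq) (s) : (G.addLeft s).rel = G.rel := rfl
@[simp] lemma LSeq.addRight_left (G : LSeq) (s) : (G.addRight s).left = G.left := rfl
@[simp] lemma LSeq.addRight_right (G : LSeq) (s) : (G.addRight s).right = G.right ∪ s := rfl
@[simp] lemma LSeq.addRight_rel (G : LSeq) (s) : (G.addRight s).rel = G.rel := rfl

/-- Boundedness of a sequent by a finite label set and finite formula set. -/
def Bdd (V : Finset ℕ) (F : Finset Formula) (G : LSeq) : Prop :=
  (∀ p ∈ G.rel, p.1 ∈ V ∧ p.2 ∈ V) ∧ (∀ p ∈ G.left, p.1 ∈ V ∧ p.2 ∈ F) ∧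
  (∀ p ∈ G.right, p.1 ∈ V ∧ p.2 ∈ F)

def grid (V : Finset ℕ) (F : Finset Formula) : Set (ℕ × Formula) :=
  (↑V : Set ℕ) ×ˢ (↑F : Set Formula)

lemma grid_fin (V : Finset ℕ) (F : Finset Formula) : (grid V F).Finite :=
  (V.finite_toSet).prod (F.finite_toSet)

lemma left_sub {V F G} (hG : Bdd V F G) : G.left ⊆ grid V F := by
  intro p hp; exact ⟨(hG.2.1 p hp).1, (hG.2.1 p hp).2⟩

lemma right_sub {V F G} (hG : Bdd V F G) : G.right ⊆ grid V F := by
  intro p hp; exact ⟨(hG.2.2 p hp).1, (hG.2.2 p hp).2⟩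

/-- Deficiency measure of a bounded sequent. -/
noncomputable def dfc (V : Finset ℕ) (F : Finset Formula) (G : LSeq) : ℕ :=
  2 * (grid V F).ncard - (G.left.ncard + G.right.ncard)

lemma step_left {V F} (G : LSeq) (new : Set (ℕ × Formula)) (hG : Bdd V F G)
    (hnew : new ⊆ grid V F) (hne : ∃ p ∈ new, p ∉ G.left) :
    Bdd V F (G.addLeft new) ∧ dfc V F (G.addLeft new) < dfc V F G := by
  obtain ⟨p, hpnew, hpleft⟩ := hne
  have hLsub : G.left ∪ new ⊆ grid V F := Set.union_subset (left_sub hG) hnew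
  have hfin : (G.left ∪ new).Finite := (grid_fin V F).subset hLsub
  have hss : G.left ⊂ G.left ∪ new := by
    refine (Set.ssubset_iff_of_subset Set.subset_union_left).2 ⟨p, Or.inr hpnew, hpleft⟩
  have h1 : G.left.ncard < (G.left ∪ new).ncard := Set.ncard_lt_ncard hss hfin
  have h2 : (G.left ∪ new).ncard ≤ (grid V F).ncard :=
    Set.ncard_le_ncard hLsub (grid_fin V F)
  have h3 : G.right.ncard ≤ (grid V F).ncard :=
    Set.ncard_le_ncard (right_sub hG) (grid_fin V F)
  constructor
  · refine ⟨hG.1, ?_, hG.2.2⟩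
    rintro q (hq | hq)
    · exact hG.2.1 q hq
    · exact ⟨(hnew hq).1, (hnew hq).2⟩
  · simp only [dfc, LSeq.addLeft_left, LSeq.addLeft_right]
    omega

lemma step_right {V F} (G : LSeq) (new : Set (ℕ × Formula)) (hG : Bdd V F G)
    (hnew : new ⊆ grid V F) (hne : ∃ p ∈ new, p ∉ G.right) :
    Bdd V F (G.addRight new) ∧ dfc V F (G.addRight new) < dfc V F G := by
  obtain ⟨p, hpnew, hpright⟩ := hne
  have hLsub : G.right ∪ new ⊆ grid V F := Set.union_subset (right_sub hG) hnew
  have hfin : (G.right ∪ new).Finite := (grid_fin V F).subset hLsub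
  have hss : G.right ⊂ G.right ∪ new := by
    refine (Set.ssubset_iff_of_subset Set.subset_union_left).2 ⟨p, Or.inr hpnew, hpright⟩
  have h1 : G.right.ncard < (G.right ∪ new).ncard := Set.ncard_lt_ncard hss hfin
  have h2 : (G.right ∪ new).ncard ≤ (grid V F).ncard :=
    Set.ncard_le_ncard hLsub (grid_fin V F)
  have h3 : G.left.ncard ≤ (grid V F).ncard :=
    Set.ncard_le_ncard (left_sub hG) (grid_fin V F)
  constructor
  · refine ⟨hG.1, hG.2.1, ?_⟩
    rintro q (hq | hq)
    · exact hG.2.2 q hq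
    · exact ⟨(hnew hq).1, (hnew hq).2⟩
  · simp only [dfc, LSeq.addRight_left, LSeq.addRight_right]
    omega

/-- The termination measure on finite sets of sequents. -/
noncomputable def mes (V : Finset ℕ) (F : Finset Formula) (s : Finset LSeq) : ℕ :=
  ∑ G ∈ s, 3 ^ dfc V F G

lemma sum_union_le' (s t : Finset LSeq) (f : LSeq → ℕ) :
    ∑ x ∈ s ∪ t, f x ≤ ∑ x ∈ s, f x + ∑ x ∈ t, f x := by
  rw [← Finset.sum_union_inter]
  exact Nat.le_add_right _ _

lemma sstep_drop {V : Finset ℕ} {F : Finset Formula} (hF : SfClosed F) {s : Finset LSeq}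
    (hB : ∀ G ∈ s, Bdd V F G) {S'' : Set LSeq} (h : SStep ↑s S'') :
    ∃ s' : Finset LSeq, (↑s' : Set LSeq) = S'' ∧ (∀ G ∈ s', Bdd V F G) ∧
      mes V F s' < mes V F s := by
  obtain ⟨G, hGs, T, hT, rfl⟩ := h
  have hGs' : G ∈ s := hGs
  have hBG := hB G hGs'
  have two : ∀ a b : LSeq, Bdd V F a → Bdd V F b → dfc V F a < dfc V F G →
      dfc V F b < dfc V F G →
      ∃ s' : Finset LSeq, (↑s' : Set LSeq) = ((↑s : Set LSeq) \ {G}) ∪ {a, b} ∧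
        (∀ H ∈ s', Bdd V F H) ∧ mes V F s' < mes V F s := by
    intro a b hBa hBb hda hdb
    refine ⟨s.erase G ∪ {a, b}, ?_, ?_, ?_⟩
    · simp
    · intro H hH
      rcases Finset.mem_union.1 hH with hH | hH
      · exact hB H (Finset.mem_of_mem_erase hH)
      · rcases Finset.mem_insert.1 hH with rfl | hH
        · exact hBa
        · rw [Finset.mem_singleton.1 hH]; exact hBb
    · have hG1 : 1 ≤ dfc V F G := by omega
      set k := 3 ^ (dfc V F G - 1) with hk
      have hk3 : 3 ^ dfc V F G = 3 * k := by
        rw [hk, ← pow_succ']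
        congr 1
        omega
      have ha3 : 3 ^ dfc V F a ≤ k := Nat.pow_le_pow_right (by norm_num) (by omega)
      have hb3 : 3 ^ dfc V F b ≤ k := Nat.pow_le_pow_right (by norm_num) (by omega)
      have hk1 : 1 ≤ k := Nat.one_le_pow _ _ (by norm_num)
      have hpair : ∑ x ∈ ({a, b} : Finset LSeq), 3 ^ dfc V F x ≤
          3 ^ dfc V F a + 3 ^ dfc V F b := by
        by_cases hab : a = b
        · subst hab; simp
        · rw [Finset.sum_pair hab]
      have hle : mes V F (s.erase G ∪ {a, b}) ≤
          mes V F (s.erase G) + ∑ x ∈ ({a, b} : Finset LSeq), 3 ^ dfc V F x :=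
        sum_union_le' _ _ _
      have herase : mes V F (s.erase G) + 3 ^ dfc V F G = mes V F s :=
        Finset.sum_erase_add s _ hGs'
      simp only [mes] at *
      omega
  cases hT with
  | @andL x A B hBl hun =>
      have hx := hBG.2.1 _ hBl
      have hnew : ({(x, A), (x, B)} : Set (ℕ × Formula)) ⊆ grid V F := by
        rintro p (rfl | rfl)
        · exact ⟨hx.1, hF.and_l hx.2⟩
        · exact ⟨hx.1, hF.and_r hx.2⟩
      have hne : ∃ p ∈ ({(x, A), (x, B)} : Set (ℕ × Formula)), p ∉ G.left := by
        simp only [LSeq.BlackHappy] at hun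
        by_cases hA : G.Black x A
        · exact ⟨(x, B), Or.inr rfl, fun h => hun ⟨hA, h⟩⟩
        · exact ⟨(x, A), Or.inl rfl, hA⟩
      obtain ⟨hB1, hd1⟩ := step_left G _ hBG hnew hne
      obtain ⟨s', hco, hi, hm⟩ := two _ _ hB1 hB1 hd1 hd1
      exact ⟨s', by rw [hco, Set.pair_eq_singleton], hi, hm⟩
  | @orR x A B hBl hun =>
      have hx := hBG.2.2 _ hBl
      have hnew : ({(x, A), (x, B)} : Set (ℕ × Formula)) ⊆ grid V F := by
        rintro p (rfl | rfl)
        · exact ⟨hx.1, hF.or_l hx.2⟩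
        · exact ⟨hx.1, hF.or_r hx.2⟩
      have hne : ∃ p ∈ ({(x, A), (x, B)} : Set (ℕ × Formula)), p ∉ G.right := by
        simp only [LSeq.WhiteHappy] at hun
        by_cases hA : G.White x A
        · exact ⟨(x, B), Or.inr rfl, fun h => hun ⟨hA, h⟩⟩
        · exact ⟨(x, A), Or.inl rfl, hA⟩
      obtain ⟨hB1, hd1⟩ := step_right G _ hBG hnew hne
      obtain ⟨s', hco, hi, hm⟩ := two _ _ hB1 hB1 hd1 hd1
      exact ⟨s', by rw [hco, Set.pair_eq_singleton], hi, hm⟩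
  | @boxL x A hBl hun =>
      have hx := hBG.2.1 _ hBl
      have hnew : {q : ℕ × Formula | G.Rel x q.1 ∧ (q.2 = A ∨ q.2 = Formula.box A)} ⊆
          grid V F := by
        rintro ⟨q1, q2⟩ ⟨hr, hq2⟩
        refine ⟨(hBG.1 (x, q1) hr).2, ?_⟩
        rcases hq2 with rfl | rfl
        · exact hF.box' hx.2
        · exact hx.2
      have hne : ∃ p ∈ {q : ℕ × Formula | G.Rel x q.1 ∧ (q.2 = A ∨ q.2 = Formula.box A)},
          p ∉ G.left := by
        simp only [LSeq.BlackHappy] at hun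
        push_neg at hun
        obtain ⟨z, hz, hnb⟩ := hun
        by_cases hA : G.Black z A
        · exact ⟨(z, Formula.box A), ⟨hz, Or.inr rfl⟩, fun h => (hnb hA) h⟩
        · exact ⟨(z, A), ⟨hz, Or.inl rfl⟩, hA⟩
      obtain ⟨hB1, hd1⟩ := step_left G _ hBG hnew hne
      obtain ⟨s', hco, hi, hm⟩ := two _ _ hB1 hB1 hd1 hd1
      exact ⟨s', by rw [hco, Set.pair_eq_singleton], hi, hm⟩
  | @diaR x A hBl hun =>
      have hx := hBG.2.2 _ hBl
      have hnew : {q : ℕ × Formula | G.Rel x q.1 ∧ (q.2 = A ∨ q.2 = Formula.dia A)} ⊆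
          grid V F := by
        rintro ⟨q1, q2⟩ ⟨hr, hq2⟩
        refine ⟨(hBG.1 (x, q1) hr).2, ?_⟩
        rcases hq2 with rfl | rfl
        · exact hF.dia' hx.2
        · exact hx.2
      have hne : ∃ p ∈ {q : ℕ × Formula | G.Rel x q.1 ∧ (q.2 = A ∨ q.2 = Formula.dia A)},
          p ∉ G.right := by
        simp only [LSeq.WhiteHappy] at hun
        push_neg at hun
        obtain ⟨z, hz, hnb⟩ := hun
        by_cases hA : G.White z A
        · exact ⟨(z, Formula.dia A), ⟨hz, Or.inr rfl⟩, fun h => (hnb hA) h⟩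
        · exact ⟨(z, A), ⟨hz, Or.inl rfl⟩, hA⟩
      obtain ⟨hB1, hd1⟩ := step_right G _ hBG hnew hne
      obtain ⟨s', hco, hi, hm⟩ := two _ _ hB1 hB1 hd1 hd1
      exact ⟨s', by rw [hco, Set.pair_eq_singleton], hi, hm⟩
  | @orL x A B hBl hun =>
      have hx := hBG.2.1 _ hBl
      simp only [LSeq.BlackHappy] at hun
      push_neg at hun
      have h1 := step_left G {(x, A)} hBG
        (by rintro p rfl; exact ⟨hx.1, hF.or_l hx.2⟩) ⟨(x, A), rfl, hun.1⟩
      have h2 := step_left G {(x, B)} hBG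
        (by rintro p rfl; exact ⟨hx.1, hF.or_r hx.2⟩) ⟨(x, B), rfl, hun.2⟩
      exact two _ _ h1.1 h2.1 h1.2 h2.2
  | @andR x A B hBl hun =>
      have hx := hBG.2.2 _ hBl
      simp only [LSeq.WhiteHappy] at hun
      push_neg at hun
      have h1 := step_right G {(x, A)} hBG
        (by rintro p rfl; exact ⟨hx.1, hF.and_l hx.2⟩) ⟨(x, A), rfl, hun.1⟩
      have h2 := step_right G {(x, B)} hBG
        (by rintro p rfl; exact ⟨hx.1, hF.and_r hx.2⟩) ⟨(x, B), rfl, hun.2⟩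
      exact two _ _ h1.1 h2.1 h1.2 h2.2
  | @impL x A B hBl hun =>
      have hx := hBG.2.1 _ hBl
      simp only [LSeq.BlackHappy] at hun
      push_neg at hun
      have h1 := step_right G {(x, A)} hBG
        (by rintro p rfl; exact ⟨hx.1, hF.imp_l hx.2⟩) ⟨(x, A), rfl, hun.1⟩
      have h2 := step_left G {(x, B)} hBG
        (by rintro p rfl; exact ⟨hx.1, hF.imp_r hx.2⟩) ⟨(x, B), rfl, hun.2⟩
      exact two _ _ h1.1 h2.1 h1.2 h2.2

lemma exists_ssat_of_bdd {V : Finset ℕ} {F : Finset Formula} (hF : SfClosed F) :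
    ∀ (N : ℕ) (s : Finset LSeq), (∀ G ∈ s, Bdd V F G) → mes V F s ≤ N →
      ∃ S', SemiSaturationOf (↑s) S' := by
  intro N
  induction N with
  | zero =>
      intro s hB hm
      by_cases h : ∃ S'', SStep ↑s S''
      · obtain ⟨S'', hS⟩ := h
        obtain ⟨s', -, -, hlt⟩ := sstep_drop hF hB hS
        omega
      · exact ⟨↑s, Relation.ReflTransGen.refl, fun S'' c => h ⟨S'', c⟩⟩
  | succ N ih =>
      intro s hB hm
      by_cases h : ∃ S'', SStep ↑s S''
      · obtain ⟨S'', hS⟩ := h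
        obtain ⟨s', hco, hB', hlt⟩ := sstep_drop hF hB hS
        obtain ⟨S', hpath, hnf⟩ := ih s' hB' (by omega)
        rw [← hco] at hS
        exact ⟨S', Relation.ReflTransGen.head hS hpath, hnf⟩
      · exact ⟨↑s, Relation.ReflTransGen.refl, fun S'' c => h ⟨S'', c⟩⟩

lemma bdd_mono {V V' F F' G} (hV : V ⊆ V') (hFs : F ⊆ F') (h : Bdd V F G) : Bdd V' F' G :=
  ⟨fun p hp => ⟨hV (h.1 p hp).1, hV (h.1 p hp).2⟩,
   fun p hp => ⟨hV (h.2.1 p hp).1, hFs (h.2.1 p hp).2⟩,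
   fun p hp => ⟨hV (h.2.2 p hp).1, hFs (h.2.2 p hp).2⟩⟩

lemma exists_bdd_single (G : LSeq) (h : G.FiniteSeq) :
    ∃ V F, SfClosed F ∧ Bdd V F G := by
  obtain ⟨hle, hrel, hl, hr⟩ := h
  refine ⟨(hrel.image Prod.fst).toFinset ∪ (hrel.image Prod.snd).toFinset ∪
      (hl.image Prod.fst).toFinset ∪ (hr.image Prod.fst).toFinset,
    (((hl.image Prod.snd).toFinset ∪ (hr.image Prod.snd).toFinset).biUnion Formula.subf),
    sfClosed_biUnion _, ?_, ?_, ?_⟩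
  · intro p hp
    constructor
    · simp only [Finset.mem_union, Set.Finite.mem_toFinset, Set.mem_image]
      exact Or.inl (Or.inl (Or.inl ⟨p, hp, rfl⟩))
    · simp only [Finset.mem_union, Set.Finite.mem_toFinset, Set.mem_image]
      exact Or.inl (Or.inl (Or.inr ⟨p, hp, rfl⟩))
  · intro p hp
    constructor
    · simp only [Finset.mem_union, Set.Finite.mem_toFinset, Set.mem_image]
      exact Or.inl (Or.inr ⟨p, hp, rfl⟩)
    · refine Finset.mem_biUnion.2 ⟨p.2, ?_, Formula.self_mem_subf _⟩
      simp only [Finset.mem_union, Set.Finite.mem_toFinset, Set.mem_image]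
      exact Or.inl ⟨p, hp, rfl⟩
  · intro p hp
    constructor
    · simp only [Finset.mem_union, Set.Finite.mem_toFinset, Set.mem_image]
      exact Or.inr ⟨p, hp, rfl⟩
    · refine Finset.mem_biUnion.2 ⟨p.2, ?_, Formula.self_mem_subf _⟩
      simp only [Finset.mem_union, Set.Finite.mem_toFinset, Set.mem_image]
      exact Or.inr ⟨p, hp, rfl⟩

lemma exists_bdd (T : Set LSeq) (hT : T.Finite) :
    (∀ G ∈ T, G.FiniteSeq) → ∃ V F, SfClosed F ∧ ∀ G ∈ T, Bdd V F G := by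
  refine Set.Finite.induction_on
    (motive := fun T _ => (∀ G ∈ T, G.FiniteSeq) → ∃ V F, SfClosed F ∧ ∀ G ∈ T, Bdd V F G)
    T hT ?_ ?_
  · intro _
    exact ⟨∅, ∅, fun B hB => by simp at hB, fun G hG => absurd hG (Set.notMem_empty G)⟩
  · intro G T' hGT hT' ih hseq
    obtain ⟨V1, F1, hF1, hB1⟩ := ih (fun H hH => hseq H (Set.mem_insert_of_mem _ hH))
    obtain ⟨V2, F2, hF2, hB2⟩ := exists_bdd_single G (hseq G (Set.mem_insert _ _))
    refine ⟨V1 ∪ V2, F1 ∪ F2, sfClosed_union hF1 hF2, ?_⟩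
    rintro H (rfl | hH)
    · exact bdd_mono Finset.subset_union_right Finset.subset_union_right hB2
    · exact bdd_mono Finset.subset_union_left Finset.subset_union_left (hB1 H hH)

/-- Every finite set of finite sequents has a semi-saturation. -/
lemma exists_semisaturation (T : Set LSeq) (hT : T.Finite) (hseq : ∀ G ∈ T, G.FiniteSeq) :
    ∃ S', SemiSaturationOf T S' := by
  obtain ⟨V, F, hF, hB⟩ := exists_bdd T hT hseq
  have := exists_ssat_of_bdd hF (mes V F hT.toFinset) hT.toFinset
    (fun G hG => hB G (hT.mem_toFinset.1 hG)) le_rfl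
  rwa [hT.coe_toFinset] at this

lemma labels_finite (G : LSeq) (h : G.FiniteSeq) : G.labels.Finite := by
  obtain ⟨hle, hrel, hl, hr⟩ := h
  apply Set.Finite.subset
    (((((hle.image Prod.fst).union (hle.image Prod.snd)).union
      ((hrel.image Prod.fst).union (hrel.image Prod.snd))).union
      ((hl.image Prod.fst).union (hr.image Prod.fst))))
  rintro x (⟨y, hy | hy | hy | hy⟩ | ⟨A, hA | hA⟩)
  · exact Or.inl (Or.inl (Or.inl ⟨(x, y), hy, rfl⟩))
  · exact Or.inl (Or.inl (Or.inr ⟨(y, x), hy, rfl⟩))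
  · exact Or.inl (Or.inr (Or.inl ⟨(x, y), hy, rfl⟩))
  · exact Or.inl (Or.inr (Or.inr ⟨(y, x), hy, rfl⟩))
  · exact Or.inr (Or.inl ⟨(x, A), hA, rfl⟩)
  · exact Or.inr (Or.inr ⟨(x, A), hA, rfl⟩)

lemma transClose_finite (s : Set (ℕ × ℕ)) (h : s.Finite) : (transClose s).Finite := by
  have key : ∀ a b, Relation.TransGen (relOf s) a b →
      a ∈ Prod.fst '' s ∧ b ∈ Prod.snd '' s := by
    intro a b hab
    induction hab with
    | single h' => exact ⟨⟨(a, _), h', rfl⟩, ⟨(a, _), h', rfl⟩⟩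
    | tail _ h' ih => exact ⟨ih.1, ⟨(_, _), h', rfl⟩⟩
  apply Set.Finite.subset ((h.image Prod.fst).prod (h.image Prod.snd))
  intro p hp
  exact key p.1 p.2 hp

lemma finite_dstep {G G' : LSeq} (h : G.DStepG G') (hG : G.FiniteSeq) : G'.FiniteSeq := by
  obtain ⟨hle, hrel, hl, hr⟩ := hG
  obtain ⟨y, A, -, -, -, (⟨x, -, rfl⟩ | ⟨-, z, -, rfl⟩)⟩ := h
  · exact ⟨hle.image _, transClose_finite _ (hrel.image _), hl.image _, hr.image _⟩
  · refine ⟨hle.union (Set.finite_singleton _), ?_, hl.union (Set.finite_singleton _), hr⟩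
    apply Set.Finite.union
    · exact transClose_finite _ (hrel.union (Set.finite_singleton _))
    · apply Set.Finite.subset
        (((labels_finite G ⟨hle, hrel, hl, hr⟩).union (Set.finite_singleton z)).image
          (fun a => (a, a)))
      rintro ⟨p1, p2⟩ ⟨heq, hp⟩
      obtain rfl : p1 = p2 := heq
      exact ⟨p1, by simpa using hp.symm, rfl⟩

lemma almost_to_naive {G : LSeq} {x : ℕ} (h : G.AlmostHappyLabel x) :
    G.NaivelyHappyLabel x := by
  refine ⟨fun A hA hN => h.1 A hA ?_, h.2⟩
  intro hA'
  apply hN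
  cases A <;> simp_all [LSeq.AlmostExceptB, LSeq.NaiveExceptB]


/-- **Lemma 7.7(c).** A finite set `S` of labelled sequents is
saturated iff `S` is semi-saturated and in normal form w.r.t. the rewrite
relation `⇝◇`. -/
theorem saturated_iff_semisaturated_normal (S : Set LSeq)
    (hfin : S.Finite) (hseq : ∀ G ∈ S, G.FiniteSeq) :
    SaturatedSet S ↔ SemiSaturatedSet S ∧ ∀ S', ¬ DStep S S' := by
  constructor
  · rintro ⟨hSfin, hsat⟩
    constructor
    · exact ⟨hSfin, fun G hG => ⟨(hsat G hG).1,
        fun L hL x hx => almost_to_naive ((hsat G hG).2 L hL x hx)⟩⟩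
    · rintro S' ⟨-, G, hGS, G'', ⟨y, A, hBy, hny, -, -⟩, -⟩
      have hG := hsat G hGS
      have hyl : y ∈ G.labels := Or.inr ⟨Formula.dia A, Or.inl hBy⟩
      have hIs : G.IsLayer (G.layerOf y) := ⟨y, hyl, rfl⟩
      have hymem : y ∈ G.layerOf y := Relation.ReflTransGen.refl
      by_cases ht : G.Topmost (G.layerOf y)
      · exact hny ((hG.2 _ ht y hymem).1 (Formula.dia A) hBy
          (by simp [LSeq.AlmostExceptB]))
      · exact hny ((hG.1.2.2 _ hIs ht y hymem).1 (Formula.dia A) hBy)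
  · rintro ⟨hss, hnf⟩
    refine ⟨hfin, fun G hG => ?_⟩
    have hsemi := hss.2 G hG
    have hstable := hsemi.1
    have hSS : G.StructSat := hstable.2.1.1
    have hreltrans : ∀ a b c, G.Rel a b → G.Rel b c → G.Rel a c := hSS.2.2.2.2.2.1
    -- key: no unhappy diamond on the left anywhere in G
    have key : ∀ u C, G.Black u (Formula.dia C) → G.BlackHappy u (Formula.dia C) := by
      by_contra hk
      push_neg at hk
      set U : Set ℕ := {u | ∃ C, G.Black u (Formula.dia C) ∧
        ¬ G.BlackHappy u (Formula.dia C)} with hUdef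
      have hUne : U.Nonempty := by
        obtain ⟨u, C, hB, hn⟩ := hk
        exact ⟨u, C, hB, hn⟩
      have hUfin : U.Finite := by
        apply Set.Finite.subset ((hseq G hG).2.2.1.image Prod.fst)
        rintro u ⟨C, hB, -⟩
        exact ⟨(u, Formula.dia C), hB, rfl⟩
      set f : ℕ → ℕ := fun v => {u | u ∈ U ∧ G.Rel u v ∧ ¬ G.Rel v u}.ncard with hfdef
      obtain ⟨y, hyU, hymin⟩ : ∃ y ∈ U, ∀ u ∈ U, f y ≤ f u := by
        obtain ⟨y, hyU, hfy⟩ := Nat.sInf_mem (hUne.image f)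
        exact ⟨y, hyU, fun u hu => hfy.le.trans (Nat.sInf_le ⟨u, hu, rfl⟩)⟩
      have hmin : ∀ u ∈ U, ¬ (G.Rel u y ∧ ¬ G.Rel y u) := by
        rintro u huU ⟨hru, hnr⟩
        have hsub : {w | w ∈ U ∧ G.Rel w u ∧ ¬ G.Rel u w} ⊂
            {w | w ∈ U ∧ G.Rel w y ∧ ¬ G.Rel y w} := by
          constructor
          · rintro w ⟨hwU, hwu, hnuw⟩
            exact ⟨hwU, hreltrans _ _ _ hwu hru,
              fun hyw => hnr (hreltrans _ _ _ hyw hwu)⟩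
          · intro hba
            obtain ⟨-, hru', hnr'⟩ := hba ⟨huU, hru, hnr⟩
            exact hnr' hru'
        have hlt : f u < f y :=
          Set.ncard_lt_ncard hsub (hUfin.subset (fun w hw => hw.1))
        exact absurd (hymin u huU) (by omega)
      obtain ⟨A, hAy, hAn⟩ := hyU
      have hyl : y ∈ G.labels := Or.inr ⟨Formula.dia A, Or.inl hAy⟩
      have hIs : G.IsLayer (G.layerOf y) := ⟨y, hyl, rfl⟩
      have htop : G.Topmost (G.layerOf y) := by
        by_contra ht
        exact hAn ((hstable.2.2 _ hIs ht y Relation.ReflTransGen.refl).1 _ hAy)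
      have hcond : ∀ u, u ≠ y → G.Rel u y → ¬ G.Rel y u → G.AlmostHappyLabel u := by
        intro u hne' hru hnyu
        have huU : u ∉ U := fun h => hmin u h ⟨hru, hnyu⟩
        have humem : u ∈ G.layerOf y := Relation.ReflTransGen.single (Or.inr hru)
        have hnv : G.NaivelyHappyLabel u := hsemi.2 _ htop u humem
        refine ⟨fun B hB hBE => ?_, hnv.2⟩
        cases B with
        | bot => exact absurd trivial hBE
        | dia C =>
            by_contra hh
            exact huU ⟨C, hB, hh⟩
        | atom a => exact hnv.1 _ hB (by simp [LSeq.NaiveExceptB])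
        | and C D => exact hnv.1 _ hB (by simp [LSeq.NaiveExceptB])
        | or C D => exact hnv.1 _ hB (by simp [LSeq.NaiveExceptB])
        | imp C D => exact hnv.1 _ hB (by simp [LSeq.NaiveExceptB])
        | box C => exact hnv.1 _ hB (by simp [LSeq.NaiveExceptB])
      have hDG : ∃ G'', G.DStepG G'' := by
        by_cases h1 : ∃ x', G.Opt1Witness y A x'
        · obtain ⟨x', hx'⟩ := h1
          exact ⟨G.opt1 y x', y, A, hAy, hAn, hcond, Or.inl ⟨x', hx', rfl⟩⟩
        · obtain ⟨z, hz⟩ := ((labels_finite G (hseq G hG)).infinite_compl).nonempty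
          exact ⟨G.opt2 y A z, y, A, hAy, hAn, hcond, Or.inr ⟨h1, z, hz, rfl⟩⟩
      obtain ⟨G'', hDG⟩ := hDG
      have hT0fin : ((S \ {G}) ∪ {G''}).Finite :=
        (hfin.subset Set.diff_subset).union (Set.finite_singleton _)
      have hT0seq : ∀ H ∈ (S \ {G}) ∪ {G''}, H.FiniteSeq := by
        rintro H (⟨hH, -⟩ | hH)
        · exact hseq H hH
        · rw [Set.mem_singleton_iff.1 hH]
          exact finite_dstep hDG (hseq G hG)
      obtain ⟨S', hS'⟩ := exists_semisaturation _ hT0fin hT0seq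
      exact hnf S' ⟨hss, G, hG, G'', hDG, hS'⟩
    refine ⟨hsemi.1, fun L hL x hx => ?_⟩
    have hn := hsemi.2 L hL x hx
    refine ⟨fun A hA hAE => ?_, hn.2⟩
    cases A with
    | bot => exact absurd trivial hAE
    | dia B => exact key x B hA
    | atom a => exact hn.1 _ hA (by simp [LSeq.NaiveExceptB])
    | and B C => exact hn.1 _ hA (by simp [LSeq.NaiveExceptB])
    | or B C => exact hn.1 _ hA (by simp [LSeq.NaiveExceptB])
    | imp B C => exact hn.1 _ hA (by simp [LSeq.NaiveExceptB])
    | box B => exact hn.1 _ hA (by simp [LSeq.NaiveExceptB])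

end SatAux
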